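/- If F : ℝ^n → ℝ is Lipschitz with constant L₀, then the two-point Gaussian gradient estimator g_μ(x) = ((F(x + μu) − F(x))/μ)·u, with u ∼ N(0, I_n), satisfies E[‖g_μ(x)‖²] ≤ L₀²(n + 4)² for every x ∈ ℝ^n. -/

import Mathlib

/-
The Lipschitz bound turns the estimator into a pointwise inequality
‖g_μ(x)‖² = ((F(x + μu) − F(x))/μ)² ‖u‖² ≤ L₀² ‖u‖⁴, so everything reduces to the fourth
moment of a standard Gaussian vector. Expanding ‖u‖⁴ = ∑ᵢ ∑ⱼ uᵢ² uⱼ² and using independence of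
the coordinates, E‖u‖⁴ = n E[u₁⁴] + (n² − n) E[u₁²]² = 3n + n² − n = n² + 2n ≤ (n + 4)²; the
one-dimensional moments come from the Gamma integral.
-/

open MeasureTheory ProbabilityTheory

/-- The standard Gaussian measure N(0, Iₙ) on ℝⁿ. -/
noncomputable def stdGaussian (n : ℕ) : Measure (Fin n → ℝ) :=
  Measure.pi fun _ => gaussianReal 0 1

/-- The Gaussian smoothing F_μ(x) = E_{u ∼ N(0,I)}[F(x + μ u)]. -/
noncomputable def gaussSmooth {n : ℕ} (F : (Fin n → ℝ) → ℝ) (μ : ℝ) (x : Fin n → ℝ) : ℝ :=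
  ∫ u, F (x + μ • u) ∂(stdGaussian n)

/-- The Euclidean norm on ℝⁿ. -/
noncomputable def euclNorm {n : ℕ} (x : Fin n → ℝ) : ℝ :=
  Real.sqrt (∑ i, (x i)^2)

/-- The two-point Gaussian gradient estimator g_μ(x) = ((F(x+μu) − F(x))/μ) u. -/
noncomputable def twoPoint {n : ℕ} (F : (Fin n → ℝ) → ℝ) (μ : ℝ)
    (x u : Fin n → ℝ) : Fin n → ℝ :=
  fun i => ((F (x + μ • u) - F x) / μ) * u i

open Real

section EuclNorm

variable {n : ℕ}

lemma euclNorm_sq (v : Fin n → ℝ) : euclNorm v ^ 2 = ∑ i, v i ^ 2 :=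
  sq_sqrt (Finset.sum_nonneg fun i _ => sq_nonneg (v i))

lemma euclNorm_pow_four (v : Fin n → ℝ) : euclNorm v ^ 4 = (∑ i, v i ^ 2) ^ 2 := by
  rw [← euclNorm_sq]; ring

lemma euclNorm_smul (c : ℝ) (v : Fin n → ℝ) : euclNorm (c • v) = |c| * euclNorm v := by
  simp only [euclNorm, Pi.smul_apply, smul_eq_mul, mul_pow, ← Finset.mul_sum]
  rw [sqrt_mul (sq_nonneg c), sqrt_sq_eq_abs]

lemma euclNorm_twoPoint_sq_le {F : (Fin n → ℝ) → ℝ} {L : ℝ}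
    (hLip : ∀ x y : Fin n → ℝ, |F x - F y| ≤ L * euclNorm (x - y)) (μ : ℝ) (x u : Fin n → ℝ) :
    euclNorm (twoPoint F μ x u) ^ 2 ≤ L ^ 2 * euclNorm u ^ 4 := by
  have hsmul : twoPoint F μ x u = ((F (x + μ • u) - F x) / μ) • u := rfl
  have hdiff : |F (x + μ • u) - F x| ≤ L * (|μ| * euclNorm u) := by
    simpa only [add_sub_cancel_left, euclNorm_smul] using hLip (x + μ • u) x
  have hquot : ((F (x + μ • u) - F x) / μ) ^ 2 ≤ L ^ 2 * euclNorm u ^ 2 := by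
    rw [div_pow]
    refine div_le_of_le_mul₀ (sq_nonneg μ) (by positivity) ?_
    calc (F (x + μ • u) - F x) ^ 2 = |F (x + μ • u) - F x| ^ 2 := (sq_abs _).symm
      _ ≤ (L * (|μ| * euclNorm u)) ^ 2 := pow_le_pow_left₀ (abs_nonneg _) hdiff 2
      _ = L ^ 2 * euclNorm u ^ 2 * μ ^ 2 := by rw [← sq_abs μ]; ring
  calc euclNorm (twoPoint F μ x u) ^ 2
      = ((F (x + μ • u) - F x) / μ) ^ 2 * euclNorm u ^ 2 := by
        rw [hsmul, euclNorm_smul, mul_pow, sq_abs]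
    _ ≤ L ^ 2 * euclNorm u ^ 2 * euclNorm u ^ 2 := by gcongr
    _ = L ^ 2 * euclNorm u ^ 4 := by ring

end EuclNorm

lemma integral_pow_gaussianReal_of_even {k : ℕ} (hk : Even k) :
    ∫ x, x ^ k ∂gaussianReal 0 1 = 2 ^ ((k : ℝ) / 2) * Gamma ((k + 1) / 2) / √π := by
  have hGamma := integral_rpow_mul_exp_neg_mul_rpow (p := 2) (q := k) (b := 1 / 2) two_pos
    (by linarith [(Nat.cast_nonneg k : (0 : ℝ) ≤ k)]) (by norm_num)
  simp only [Real.rpow_natCast, Real.rpow_two] at hGamma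
  rw [integral_gaussianReal_eq_integral_smul one_ne_zero]
  have hpdf : ∀ x : ℝ, gaussianPDFReal 0 1 x • x ^ k
      = (√(2 * π))⁻¹ * (|x| ^ k * exp (-(1 / 2) * |x| ^ 2)) := by
    intro x
    rw [gaussianPDFReal, hk.pow_abs, sq_abs, smul_eq_mul]
    push_cast
    ring_nf
  simp_rw [hpdf]
  rw [integral_const_mul, integral_comp_abs (f := fun x => x ^ k * exp (-(1 / 2) * x ^ 2)),
    hGamma]
  have h2 : ((1 : ℝ) / 2) ^ (-((k : ℝ) + 1) / 2) = 2 ^ ((k : ℝ) / 2) * √2 := by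
    rw [one_div, inv_rpow zero_le_two, ← rpow_neg zero_le_two, neg_div, neg_neg, add_div,
      rpow_add two_pos, sqrt_eq_rpow]
  rw [h2, sqrt_mul zero_le_two]
  field_simp

lemma integral_sq_gaussianReal : ∫ x, x ^ 2 ∂gaussianReal 0 1 = 1 := by
  rw [integral_pow_gaussianReal_of_even even_two, show ((2 : ℕ) + 1) / 2 = (1 / 2 : ℝ) + 1 by norm_num, Gamma_add_one (by norm_num),
    Gamma_one_half_eq, show ((2 : ℕ) : ℝ) / 2 = 1 by norm_num, rpow_one]
  field_simp

lemma integral_pow_four_gaussianReal : ∫ x, x ^ 4 ∂gaussianReal 0 1 = 3 := by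
  rw [integral_pow_gaussianReal_of_even (by decide), show ((4 : ℕ) + 1) / 2 = (1 / 2 + 1 : ℝ) + 1 by norm_num, Gamma_add_one (by norm_num),
    Gamma_add_one (by norm_num), Gamma_one_half_eq,
    show ((4 : ℕ) : ℝ) / 2 = (2 : ℕ) by norm_num, rpow_natCast]
  field_simp
  norm_num

lemma integrable_pow_four_gaussianReal : Integrable (fun x : ℝ => x ^ 4) (gaussianReal 0 1) := by
  simpa only [id, Real.norm_eq_abs, (show Even 4 by decide).pow_abs] using
    (memLp_id_gaussianReal (μ := 0) (v := 1) 4).integrable_norm_pow' (p := 4)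

section ProductMeasure

variable {ι : Type*} [Fintype ι] {ν : Measure ℝ} [IsProbabilityMeasure ν]

lemma integral_sq_mul_sq_pi [DecidableEq ι] (i j : ι) :
    ∫ u, u i ^ 2 * u j ^ 2 ∂Measure.pi (fun _ => ν)
      = if i = j then ∫ x, x ^ 4 ∂ν else (∫ x, x ^ 2 ∂ν) ^ 2 := by
  have hsq : AEStronglyMeasurable (fun x : ℝ => x ^ 2) ν := (continuous_pow 2).aestronglyMeasurable
  split_ifs with hij
  · subst hij
    simp_rw [← pow_add]
    exact integral_comp_eval (μ := fun _ : ι => ν) (continuous_pow 4).aestronglyMeasurable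
  · have hind : IndepFun (fun u : ι → ℝ => u i) (fun u => u j) (Measure.pi fun _ => ν) :=
      (iIndepFun_pi (X := fun _ => id) fun _ => aemeasurable_id).indepFun hij
    rw [hind.integral_fun_comp_mul_comp (measurable_pi_apply i).aemeasurable
      (measurable_pi_apply j).aemeasurable (continuous_pow 2).aestronglyMeasurable
      (continuous_pow 2).aestronglyMeasurable, integral_comp_eval (μ := fun _ : ι => ν) hsq,
      integral_comp_eval (μ := fun _ : ι => ν) hsq, sq]

lemma integrable_sq_mul_sq_pi (h4 : Integrable (fun x => x ^ 4) ν) (i j : ι) :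
    Integrable (fun u => u i ^ 2 * u j ^ 2) (Measure.pi fun _ => ν) := by
  refine ((integrable_comp_eval (i := i) h4).add (integrable_comp_eval (i := j) h4)).mono'
    (by fun_prop) (ae_of_all _ fun u => ?_)
  rw [Real.norm_eq_abs, abs_of_nonneg (by positivity), Pi.add_apply]
  nlinarith [sq_nonneg (u i ^ 2 - u j ^ 2)]

lemma integrable_sum_sq_sq_pi (h4 : Integrable (fun x => x ^ 4) ν) :
    Integrable (fun u : ι → ℝ => (∑ i, u i ^ 2) ^ 2) (Measure.pi fun _ => ν) := by
  simp_rw [sq (∑ i, _ : ℝ), Finset.sum_mul_sum]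
  exact integrable_finsetSum _ fun i _ => integrable_finsetSum _ fun j _ =>
    integrable_sq_mul_sq_pi h4 i j

lemma integral_sum_sq_sq_pi (h4 : Integrable (fun x => x ^ 4) ν) :
    ∫ u : ι → ℝ, (∑ i, u i ^ 2) ^ 2 ∂Measure.pi (fun _ => ν)
      = Fintype.card ι * ∫ x, x ^ 4 ∂ν
        + (Fintype.card ι ^ 2 - Fintype.card ι) * (∫ x, x ^ 2 ∂ν) ^ 2 := by
  classical
  simp_rw [sq (∑ i, _ : ℝ), Finset.sum_mul_sum]
  rw [integral_finsetSum _ fun i _ => integrable_finsetSum _ fun j _ =>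
    integrable_sq_mul_sq_pi h4 i j]
  simp_rw [integral_finsetSum _ fun j _ => integrable_sq_mul_sq_pi h4 _ j,
    integral_sq_mul_sq_pi]
  have hrow : ∀ i : ι, (∑ j, if i = j then ∫ x, x ^ 4 ∂ν else (∫ x, x ^ 2 ∂ν) ^ 2)
      = ∫ x, x ^ 4 ∂ν + (Fintype.card ι - 1) * (∫ x, x ^ 2 ∂ν) ^ 2 := by
    intro i
    rw [← Finset.add_sum_erase _ _ (Finset.mem_univ i), if_pos rfl,
      Finset.sum_congr rfl fun j hj => if_neg (Finset.ne_of_mem_erase hj).symm,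
      Finset.sum_const, Finset.card_erase_of_mem (Finset.mem_univ i), Finset.card_univ,
      nsmul_eq_mul, Nat.cast_pred (Fintype.card_pos_iff.2 ⟨i⟩)]
  simp only [hrow, Finset.sum_const, Finset.card_univ, nsmul_eq_mul]
  ring

end ProductMeasure

lemma integrable_euclNorm_pow_four_stdGaussian (n : ℕ) :
    Integrable (fun u => euclNorm u ^ 4) (stdGaussian n) := by
  simp only [euclNorm_pow_four]
  exact integrable_sum_sq_sq_pi integrable_pow_four_gaussianReal

lemma integral_euclNorm_pow_four_stdGaussian (n : ℕ) :
    ∫ u, euclNorm u ^ 4 ∂stdGaussian n = (n : ℝ) ^ 2 + 2 * n := by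
  simp only [euclNorm_pow_four, _root_.stdGaussian]
  rw [integral_sum_sq_sq_pi integrable_pow_four_gaussianReal, integral_pow_four_gaussianReal,
    integral_sq_gaussianReal, Fintype.card_fin]
  ring

theorem stmt11_general {n : ℕ} (F : (Fin n → ℝ) → ℝ) (L₀ : ℝ)
    (hLip : ∀ x y : Fin n → ℝ, |F x - F y| ≤ L₀ * euclNorm (x - y))
    (μ : ℝ) (x : Fin n → ℝ) :
    ∫ u, euclNorm (twoPoint F μ x u) ^ 2 ∂(stdGaussian n) ≤ L₀^2 * (n + 4)^2 := by
  calc ∫ u, euclNorm (twoPoint F μ x u) ^ 2 ∂(stdGaussian n)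
      ≤ ∫ u, L₀ ^ 2 * euclNorm u ^ 4 ∂(stdGaussian n) :=
        integral_mono_of_nonneg (ae_of_all _ fun u => sq_nonneg _)
          ((integrable_euclNorm_pow_four_stdGaussian n).const_mul _)
          (ae_of_all _ (euclNorm_twoPoint_sq_le hLip μ x))
    _ = L₀ ^ 2 * ((n : ℝ) ^ 2 + 2 * n) := by
        rw [integral_const_mul, integral_euclNorm_pow_four_stdGaussian]
    _ ≤ L₀ ^ 2 * (n + 4) ^ 2 := by
        gcongr
        nlinarith [(Nat.cast_nonneg n : (0 : ℝ) ≤ n)]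

/-- if F is L₀-Lipschitz then E[‖g_μ(x)‖²] ≤ L₀²(n+4)². -/
theorem stmt11 {n : ℕ} (F : (Fin n → ℝ) → ℝ) (L₀ : ℝ) (hL₀ : 0 < L₀)
    (hLip : ∀ x y : Fin n → ℝ, |F x - F y| ≤ L₀ * euclNorm (x - y))
    (μ : ℝ) (hμ : 0 < μ) (x : Fin n → ℝ) :
    ∫ u, euclNorm (twoPoint F μ x u) ^ 2 ∂(stdGaussian n) ≤ L₀^2 * (n + 4)^2 :=
  stmt11_general F L₀ hLip μ x
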